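/- Given a root system (Y, X, ⟨,⟩, α̌_i, α_i (i ∈ I)), let W ≤ Aut(X) be the subgroup generated by the reflections s_i : x ↦ x − ⟨α̌_i, x⟩α_i and let R = {w(α_i) : w ∈ W, i ∈ I} ⊆ X. Then every element β of R satisfies either β ∈ Σ_{i∈I} ℕα_i or −β ∈ Σ_{i∈I} ℕα_i; that is, R = R⁺ ∪ R⁻ where R⁺ = R ∩ (Σ_i ℕα_i) and R⁻ = −R⁺. -/

import Mathlib

/-!
Work in coordinates: `sᵢ` acts on `I → ℤ` through the Cartan matrix `A i j = ⟨α̌ᵢ, αⱼ⟩`, and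
`v ↦ ∑ vⱼ αⱼ` intertwines this action with the one on `X`, so it suffices to show that `w eₖ ≥ 0`
or `w eₖ ≤ 0` for every product `w` of simple reflections. With `ℓ` the word length we prove
`w eₖ ≥ 0` whenever `ℓ w ≤ ℓ (w sₖ)` (the other case follows by replacing `w` with `w sₖ`).
Let `sₖ'` be the last letter of a reduced word for `w`. Write `w = v u` with `u` in the dihedral
subgroup `⟨sₖ, sₖ'⟩`, `ℓ v + ℓₖₖ' u = ℓ w`, and `ℓ v` minimal (Deodhar). Then `v` has ascents at
`k` and `k'`, so `v eₖ, v eₖ' ≥ 0` by induction, and `u` has an ascent at `k`, so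
`u eₖ = x eₖ + y eₖ'` with `x, y ≥ 0` by the rank-two case. Positive definiteness forces every
rank-two Cartan submatrix to be of type `A₁ × A₁`, `A₂`, `B₂` or `G₂`; for these, the braid relation
and the positivity of the short alternating words are checked by computation.
-/

namespace RootPositivity

section WordLength

variable {ι κ M : Type*} [Monoid M] (r : ι → M)

def wordProd (L : List ι) : M := (L.map r).prod

@[simp] lemma wordProd_nil : wordProd r [] = 1 := rfl

@[simp] lemma wordProd_cons (i : ι) (L : List ι) :
    wordProd r (i :: L) = r i * wordProd r L := by
  simp [wordProd]

@[simp] lemma wordProd_append (L L' : List ι) :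
    wordProd r (L ++ L') = wordProd r L * wordProd r L' := by
  simp [wordProd]

@[simp] lemma wordProd_singleton (i : ι) : wordProd r [i] = r i := by
  simp [wordProd]

lemma wordProd_comp (f : κ → ι) (L : List κ) : wordProd (r ∘ f) L = wordProd r (L.map f) := by
  simp [wordProd]

noncomputable def wordLength (w : M) : ℕ :=
  sInf {n | ∃ L, L.length = n ∧ wordProd r L = w}

variable {r}

lemma wordLength_le_length {L : List ι} {w : M} (h : wordProd r L = w) :
    wordLength r w ≤ L.length :=
  Nat.sInf_le ⟨L, rfl, h⟩

lemma exists_length_eq_wordLength {w : M} (hw : w ∈ Set.range (wordProd r)) :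
    ∃ L, L.length = wordLength r w ∧ wordProd r L = w := by
  obtain ⟨L, hL⟩ := hw
  exact Nat.sInf_mem (s := {n | ∃ L, L.length = n ∧ wordProd r L = w}) ⟨L.length, L, rfl, hL⟩

lemma mul_mem_range {u v : M} (hu : u ∈ Set.range (wordProd r))
    (hv : v ∈ Set.range (wordProd r)) : u * v ∈ Set.range (wordProd r) := by
  obtain ⟨L, rfl⟩ := hu
  obtain ⟨L', rfl⟩ := hv
  exact ⟨L ++ L', wordProd_append r L L'⟩

lemma generator_mem_range (i : ι) : r i ∈ Set.range (wordProd r) :=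
  ⟨[i], wordProd_singleton r i⟩

lemma range_comp_subset (f : κ → ι) :
    Set.range (wordProd (r ∘ f)) ⊆ Set.range (wordProd r) := by
  rintro _ ⟨L, rfl⟩
  exact ⟨L.map f, (wordProd_comp r f L).symm⟩

lemma wordLength_mul_le {u v : M} (hu : u ∈ Set.range (wordProd r))
    (hv : v ∈ Set.range (wordProd r)) :
    wordLength r (u * v) ≤ wordLength r u + wordLength r v := by
  obtain ⟨L, hL, rfl⟩ := exists_length_eq_wordLength hu
  obtain ⟨L', hL', rfl⟩ := exists_length_eq_wordLength hv
  rw [← hL, ← hL', ← List.length_append]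
  exact wordLength_le_length (wordProd_append r L L')

lemma wordLength_generator_le (i : ι) : wordLength r (r i) ≤ 1 :=
  wordLength_le_length (wordProd_singleton r i)

lemma wordLength_le_wordLength_comp {f : κ → ι} {w : M}
    (hw : w ∈ Set.range (wordProd (r ∘ f))) : wordLength r w ≤ wordLength (r ∘ f) w := by
  obtain ⟨L, hL, rfl⟩ := exists_length_eq_wordLength hw
  rw [← hL, wordProd_comp, ← List.length_map f]
  exact wordLength_le_length rfl

lemma wordProd_append_singleton_mul (hr : ∀ i, r i * r i = 1) (L : List ι) (i : ι) :
    wordProd r (L ++ [i]) * r i = wordProd r L := by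
  rw [wordProd_append, wordProd_singleton, mul_assoc, hr, mul_one]

lemma wordProd_mul_wordProd_reverse (hr : ∀ i, r i * r i = 1) (L : List ι) :
    wordProd r L * wordProd r L.reverse = 1 := by
  induction L with
  | nil => simp
  | cons i L ih =>
    rw [wordProd_cons, List.reverse_cons, wordProd_append, wordProd_singleton, mul_assoc,
      ← mul_assoc (wordProd r L), ih, one_mul, hr]

lemma wordLength_mul_generator_lt (hr : ∀ i, r i * r i = 1) {L : List ι} {i : ι} {w : M}
    (hL : wordProd r (L ++ [i]) = w) (hlen : (L ++ [i]).length = wordLength r w) :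
    wordLength r (w * r i) < wordLength r w := by
  rw [← hlen, ← hL, wordProd_append_singleton_mul hr, List.length_append, List.length_singleton]
  exact Nat.lt_succ_of_le (wordLength_le_length rfl)

theorem exists_ascending_left_factor (hr : ∀ i, r i * r i = 1) {f : κ → ι} {w v₀ u₀ : M}
    (hv₀ : v₀ ∈ Set.range (wordProd r)) (hu₀ : u₀ ∈ Set.range (wordProd (r ∘ f)))
    (hw : v₀ * u₀ = w) (hlen : wordLength r v₀ + wordLength (r ∘ f) u₀ ≤ wordLength r w) :
    ∃ v ∈ Set.range (wordProd r), ∃ u ∈ Set.range (wordProd (r ∘ f)), v * u = w ∧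
      wordLength r v + wordLength (r ∘ f) u ≤ wordLength r w ∧
      wordLength r v ≤ wordLength r v₀ ∧ ∀ c, wordLength r v ≤ wordLength r (v * r (f c)) := by
  induction hn : wordLength r v₀ using Nat.strong_induction_on generalizing v₀ u₀ with
  | _ n ih =>
  by_cases hasc : ∀ c, wordLength r v₀ ≤ wordLength r (v₀ * r (f c))
  · exact ⟨v₀, hv₀, u₀, hu₀, hw, hlen, hn.le, hasc⟩
  obtain ⟨c, hc⟩ : ∃ c, wordLength r (v₀ * r (f c)) < wordLength r v₀ := by
    simpa using hasc
  have hv₁ : v₀ * r (f c) ∈ Set.range (wordProd r) := mul_mem_range hv₀ (generator_mem_range _)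
  have hu₁ : r (f c) * u₀ ∈ Set.range (wordProd (r ∘ f)) :=
    mul_mem_range (generator_mem_range (r := r ∘ f) c) hu₀
  have hw₁ : v₀ * r (f c) * (r (f c) * u₀) = w := by
    rw [mul_assoc, ← mul_assoc (r (f c)), hr, one_mul, hw]
  have hu₁len : wordLength (r ∘ f) (r (f c) * u₀) ≤ 1 + wordLength (r ∘ f) u₀ :=
    (wordLength_mul_le (generator_mem_range (r := r ∘ f) c) hu₀).trans
      (Nat.add_le_add_right (wordLength_generator_le (r := r ∘ f) c) _)
  obtain ⟨v, hv, u, hu, hvu, hlen', hvle, hasc⟩ := ih _ (hn ▸ hc) hv₁ hu₁ hw₁ (by omega) rfl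
  exact ⟨v, hv, u, hu, hvu, hlen', by omega, hasc⟩

end WordLength

section Dihedral

open CoxeterSystem (alternatingWord alternatingWord_succ alternatingWord_succ'
  length_alternatingWord)

lemma exists_prefix_alternatingWord {B : Type*} (i i' : B) (m d : ℕ) :
    ∃ P : List B, P.length = d ∧ alternatingWord i i' (d + m) = P ++ alternatingWord i i' m := by
  induction d with
  | zero => exact ⟨[], rfl, by simp⟩
  | succ d ih =>
    obtain ⟨P, hP, h⟩ := ih
    rw [Nat.add_right_comm, alternatingWord_succ', h, ← List.cons_append]
    exact ⟨_, by simp [hP], rfl⟩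

variable {M : Type*} [Monoid M] {r : Bool → M}

lemma exists_alternatingWord_eq_wordProd (hr : ∀ c, r c * r c = 1) (L : List Bool) :
    ∃ c n, n ≤ L.length ∧ wordProd r (alternatingWord (!c) c n) = wordProd r L := by
  induction L using List.reverseRecOn with
  | nil => exact ⟨true, 0, le_rfl, rfl⟩
  | append_singleton L d ih =>
    obtain ⟨c, n, hn, hL⟩ := ih
    rw [wordProd_append, ← hL, wordProd_singleton, List.length_append, List.length_singleton]
    rcases n with _ | k
    · exact ⟨d, 1, by omega, by simp [alternatingWord]⟩
    obtain rfl | rfl : d = c ∨ d = !c := by cases c <;> cases d <;> simp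
    · refine ⟨!d, k, by omega, ?_⟩
      rw [alternatingWord_succ, List.concat_eq_append, wordProd_append_singleton_mul hr,
        Bool.not_not]
    · refine ⟨!c, k + 2, by omega, ?_⟩
      rw [alternatingWord_succ, List.concat_eq_append, wordProd_append, wordProd_singleton,
        Bool.not_not]

lemma exists_alternatingWord_wordLength_eq (hr : ∀ c, r c * r c = 1) {u : M}
    (hu : u ∈ Set.range (wordProd r)) :
    ∃ c, wordProd r (alternatingWord (!c) c (wordLength r u)) = u := by
  obtain ⟨L, hL, rfl⟩ := exists_length_eq_wordLength hu
  obtain ⟨c, n, hn, hc⟩ := exists_alternatingWord_eq_wordProd hr L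
  have : wordLength r (wordProd r L) ≤ n := by
    simpa using wordLength_le_length hc
  exact ⟨c, by rwa [show wordLength r (wordProd r L) = n by omega]⟩

theorem exists_alternatingWord_of_wordLength_le (hr : ∀ c, r c * r c = 1) {m : ℕ} (hm : 0 < m)
    (hbraid :
      wordProd r (alternatingWord true false m) = wordProd r (alternatingWord false true m))
    {u : M} (hu : u ∈ Set.range (wordProd r))
    (hasc : wordLength r u ≤ wordLength r (u * r true)) :
    ∃ n < m, wordProd r (alternatingWord true false n) = u := by
  obtain ⟨c, hc⟩ := exists_alternatingWord_wordLength_eq hr hu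
  have hnot : ∀ L, wordProd r (L ++ [true]) = u → (L ++ [true]).length ≠ wordLength r u :=
    fun L hL hlen => (wordLength_mul_generator_lt hr hL hlen).not_ge hasc
  have hn : wordLength r u < m := by
    -- otherwise the braid relation turns the last `m` letters into a word ending in `true`
    by_contra! h
    obtain ⟨P, hP, hsplit⟩ := exists_prefix_alternatingWord (!c) c m (wordLength r u - m)
    obtain ⟨k, rfl⟩ : ∃ k, m = k + 1 := ⟨m - 1, by omega⟩
    have hlast : wordProd r (alternatingWord (!c) c (k + 1)) =
        wordProd r (alternatingWord true false k ++ [true]) := by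
      rw [← List.concat_eq_append, ← alternatingWord_succ]
      cases c
      · exact hbraid
      · rfl
    refine hnot (P ++ alternatingWord true false k) ?_ ?_
    · rw [List.append_assoc, wordProd_append, ← hlast, ← wordProd_append, ← hsplit,
        Nat.sub_add_cancel h, hc]
    · simp only [List.length_append, length_alternatingWord, List.length_singleton]
      omega
  cases c
  · exact ⟨_, hn, hc⟩
  · rcases hk : wordLength r u with _ | k
    · exact ⟨0, hk ▸ hn, by rw [← hc, hk]; rfl⟩
    · rw [hk, alternatingWord_succ, List.concat_eq_append] at hc
      exact absurd (by simp [hk]) (hnot _ hc)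

end Dihedral

section SimpleReflection

open CoxeterSystem (alternatingWord)
open scoped Matrix

variable {I : Type*} [Fintype I] [DecidableEq I]

def simpleReflection (A : Matrix I I ℤ) (k : I) : Module.End ℤ (I → ℤ) :=
  LinearMap.id - (LinearMap.proj k ∘ₗ A.mulVecLin).smulRight (Pi.single k 1)

@[simp] lemma simpleReflection_apply (A : Matrix I I ℤ) (k : I) (v : I → ℤ) :
    simpleReflection A k v = v - (A *ᵥ v) k • Pi.single k 1 := rfl

variable {A : Matrix I I ℤ}

lemma simpleReflection_single_self (hA : ∀ k, A k k = 2) (k : I) :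
    simpleReflection A k (Pi.single k 1) = -Pi.single k 1 := by
  rw [simpleReflection_apply, Matrix.mulVec_single_one, Matrix.col_apply, hA]
  module

lemma simpleReflection_mul_self (hA : ∀ k, A k k = 2) (k : I) :
    simpleReflection A k * simpleReflection A k = 1 := by
  refine LinearMap.ext fun v => ?_
  have hcoeff : (A *ᵥ simpleReflection A k v) k = -(A *ᵥ v) k := by
    simp only [simpleReflection_apply, Matrix.mulVec_sub, Matrix.mulVec_smul,
      Matrix.mulVec_single_one, Pi.sub_apply, Pi.smul_apply, Matrix.col_apply, hA, smul_eq_mul]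
    ring
  rw [Module.End.mul_apply, simpleReflection_apply _ _ (simpleReflection A k v), hcoeff,
    simpleReflection_apply, Module.End.one_apply]
  module

/-- The reflections `s₁, s₂` of the Cartan matrix `[[2, a], [b, 2]]` on the coefficients `(x, y)`
of `v + x α₁ + y α₂`, where `p = ⟨α̌₁, v⟩` and `q = ⟨α̌₂, v⟩` are left unchanged. -/
def planarReflection (a b p q : ℤ) : Bool → ℤ × ℤ → ℤ × ℤ
  | true, z => (-z.1 - a * z.2 - p, z.2)
  | false, z => (z.1, -z.2 - b * z.1 - q)

def planarAction (a b p q : ℤ) (L : List Bool) (z : ℤ × ℤ) : ℤ × ℤ :=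
  L.foldr (planarReflection a b p q) z

@[simp] lemma planarAction_cons (a b p q : ℤ) (c : Bool) (L : List Bool) (z : ℤ × ℤ) :
    planarAction a b p q (c :: L) z = planarReflection a b p q c (planarAction a b p q L z) :=
  rfl

lemma wordProd_apply_add_smul_single (hA : ∀ k, A k k = 2) (i j : I) (L : List Bool)
    (v : I → ℤ) (z : ℤ × ℤ) :
    wordProd (simpleReflection A ∘ (cond · i j)) L
        (v + z.1 • Pi.single i 1 + z.2 • Pi.single j 1) =
      v + (planarAction (A i j) (A j i) ((A *ᵥ v) i) ((A *ᵥ v) j) L z).1 • Pi.single i 1 +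
        (planarAction (A i j) (A j i) ((A *ᵥ v) i) ((A *ᵥ v) j) L z).2 • Pi.single j 1 := by
  induction L with
  | nil => rfl
  | cons c L ih =>
    rw [wordProd_cons, Module.End.mul_apply, ih, planarAction_cons]
    cases c <;>
    simp only [Function.comp_apply, cond_true, cond_false, simpleReflection_apply,
      planarReflection, Matrix.mulVec_add, Matrix.mulVec_smul, Matrix.mulVec_single_one,
      Pi.add_apply, Pi.smul_apply, Matrix.col_apply, hA, smul_eq_mul] <;>
    module

/-- For the Cartan matrix `[[2, a], [b, 2]]`, the braid relation of length `m` holds and the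
alternating words of length `< m` ending in `s₂` map `α₁` to a nonnegative combination of
`α₁, α₂`. -/
structure IsDihedralPositive (a b : ℤ) (m : ℕ) : Prop where
  pos : 0 < m
  braid : ∀ p q z, planarAction a b p q (alternatingWord true false m) z =
    planarAction a b p q (alternatingWord false true m) z
  nonneg : ∀ n < m, 0 ≤ planarAction a b 0 0 (alternatingWord true false n) (1, 0)

lemma cartan_rankTwo_cases {a b : ℤ} (ha : a ≤ 0) (hb : b ≤ 0) (hab : a = 0 ↔ b = 0)
    (h4 : a * b < 4) :
    a = 0 ∧ b = 0 ∨ a = -1 ∧ b = -1 ∨ a = -1 ∧ b = -2 ∨ a = -2 ∧ b = -1 ∨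
      a = -1 ∧ b = -3 ∨ a = -3 ∧ b = -1 := by
  rcases eq_or_lt_of_le ha with rfl | ha'
  · exact Or.inl ⟨rfl, hab.mp rfl⟩
  have hb' : b < 0 := lt_of_le_of_ne hb fun h => ha'.ne (hab.mpr h)
  have : -3 ≤ a := by nlinarith
  have : -3 ≤ b := by nlinarith
  interval_cases a <;> interval_cases b <;> simp_all

lemma exists_isDihedralPositive {a b : ℤ} (ha : a ≤ 0) (hb : b ≤ 0) (hab : a = 0 ↔ b = 0)
    (h4 : a * b < 4) : ∃ m, IsDihedralPositive a b m := by
  -- `a b = 4 cos² (π / m)`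
  rcases cartan_rankTwo_cases ha hb hab h4 with
      ⟨rfl, rfl⟩ | ⟨rfl, rfl⟩ | ⟨rfl, rfl⟩ | ⟨rfl, rfl⟩ | ⟨rfl, rfl⟩ | ⟨rfl, rfl⟩ <;>
    [refine ⟨2, ?_⟩; refine ⟨3, ?_⟩; refine ⟨4, ?_⟩; refine ⟨4, ?_⟩; refine ⟨6, ?_⟩;
      refine ⟨6, ?_⟩] <;>
    refine ⟨by norm_num, fun p q z => ?_, by decide⟩ <;>
    ext <;>
    simp only [planarAction, alternatingWord, List.concat_eq_append, List.nil_append,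
      List.cons_append, List.foldr_cons, List.foldr_nil, planarReflection] <;>
    ring

lemma wordProd_braid (hA : ∀ k, A k k = 2) (i j : I) {m : ℕ}
    (hm : IsDihedralPositive (A i j) (A j i) m) :
    wordProd (simpleReflection A ∘ (cond · i j)) (alternatingWord true false m) =
      wordProd (simpleReflection A ∘ (cond · i j)) (alternatingWord false true m) := by
  refine LinearMap.ext fun v => ?_
  have h₁ := wordProd_apply_add_smul_single hA i j (alternatingWord true false m) v 0
  have h₂ := wordProd_apply_add_smul_single hA i j (alternatingWord false true m) v 0
  simp only [Prod.fst_zero, Prod.snd_zero, zero_smul, add_zero] at h₁ h₂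
  rw [h₁, h₂, hm.braid]

theorem rankTwo_nonneg (hA : ∀ k, A k k = 2) {i j : I} {m : ℕ}
    (hm : IsDihedralPositive (A i j) (A j i) m) {u : Module.End ℤ (I → ℤ)}
    (hu : u ∈ Set.range (wordProd (simpleReflection A ∘ (cond · i j))))
    (hasc : wordLength (simpleReflection A ∘ (cond · i j)) u ≤
      wordLength (simpleReflection A ∘ (cond · i j)) (u * simpleReflection A i)) :
    ∃ x y : ℤ, 0 ≤ x ∧ 0 ≤ y ∧ u (Pi.single i 1) = x • Pi.single i 1 + y • Pi.single j 1 := by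
  obtain ⟨n, hn, rfl⟩ := exists_alternatingWord_of_wordLength_le
    (fun c => simpleReflection_mul_self hA _) hm.pos (wordProd_braid hA i j hm) hu hasc
  have h := wordProd_apply_add_smul_single hA i j (alternatingWord true false n) 0 (1, 0)
  rw [zero_add, one_smul, zero_smul, add_zero, Matrix.mulVec_zero, Pi.zero_apply, zero_add] at h
  exact ⟨_, _, (hm.nonneg n hn).1, (hm.nonneg n hn).2, h⟩

theorem nonneg_of_wordLength_le (hA : ∀ k, A k k = 2)
    (hrank2 : ∀ i j, i ≠ j → ∃ m, IsDihedralPositive (A i j) (A j i) m)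
    {w : Module.End ℤ (I → ℤ)} (hw : w ∈ Set.range (wordProd (simpleReflection A))) {k : I}
    (hk : wordLength (simpleReflection A) w ≤
      wordLength (simpleReflection A) (w * simpleReflection A k)) :
    0 ≤ w (Pi.single k 1) := by
  have hr := simpleReflection_mul_self hA
  induction hn : wordLength (simpleReflection A) w using Nat.strong_induction_on
    generalizing w k with
  | _ n ih =>
  obtain ⟨L, hL, hLw⟩ := exists_length_eq_wordLength hw
  rcases L.eq_nil_or_concat with rfl | ⟨L₀, k', rfl⟩
  · simp [← hLw, Pi.single_nonneg]
  rw [List.concat_eq_append] at hL hLw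
  have hkk' : k ≠ k' := by
    rintro rfl
    exact (wordLength_mul_generator_lt hr hLw hL).not_ge hk
  have hL₀ := wordLength_le_length (r := simpleReflection A) (L := L₀) rfl
  have hk' := wordLength_generator_le (r := simpleReflection A ∘ (cond · k k')) false
  simp only [List.length_append, List.length_singleton] at hL
  obtain ⟨v, hv, u, hu, hvu, hlen, hvlen, hvasc⟩ := exists_ascending_left_factor (w := w)
    (f := (cond · k k')) hr ⟨L₀, rfl⟩ (generator_mem_range false)
    (by rw [← hLw, wordProd_append, wordProd_singleton]; rfl) (by omega)
  have hvn : wordLength (simpleReflection A) v < n := by omega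
  have huasc : wordLength (simpleReflection A ∘ (cond · k k')) u ≤
      wordLength (simpleReflection A ∘ (cond · k k')) (u * simpleReflection A k) := by
    by_contra! h
    have hu' := mul_mem_range hu (generator_mem_range true)
    have : wordLength (simpleReflection A) (w * simpleReflection A k) ≤
        wordLength (simpleReflection A) v +
          wordLength (simpleReflection A ∘ (cond · k k')) (u * simpleReflection A k) := by
      rw [← hvu, mul_assoc]
      exact (wordLength_mul_le hv (range_comp_subset _ hu')).trans
        (Nat.add_le_add_left (wordLength_le_wordLength_comp hu') _)
    omega
  obtain ⟨m, hm⟩ := hrank2 k k' hkk'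
  obtain ⟨x, y, hx, hy, huk⟩ := rankTwo_nonneg hA hm hu huasc
  rw [← hvu, Module.End.mul_apply, huk, map_add, map_smul, map_smul]
  exact add_nonneg (smul_nonneg hx (ih _ hvn hv (hvasc true) rfl))
    (smul_nonneg hy (ih _ hvn hv (hvasc false) rfl))

theorem nonneg_or_nonpos (hA : ∀ k, A k k = 2)
    (hrank2 : ∀ i j, i ≠ j → ∃ m, IsDihedralPositive (A i j) (A j i) m)
    {w : Module.End ℤ (I → ℤ)} (hw : w ∈ Set.range (wordProd (simpleReflection A))) (k : I) :
    0 ≤ w (Pi.single k 1) ∨ w (Pi.single k 1) ≤ 0 := by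
  rcases le_total (wordLength (simpleReflection A) w)
    (wordLength (simpleReflection A) (w * simpleReflection A k)) with h | h
  · exact Or.inl (nonneg_of_wordLength_le hA hrank2 hw h)
  · right
    have hpos := nonneg_of_wordLength_le hA hrank2 (k := k)
      (mul_mem_range hw (generator_mem_range k))
      (by rwa [mul_assoc, simpleReflection_mul_self hA, mul_one])
    rwa [Module.End.mul_apply, simpleReflection_single_self hA, map_neg, neg_nonneg] at hpos

end SimpleReflection

section PositiveDefinite

variable {I : Type*}

lemma sum_sum_single_add_single [Fintype I] [DecidableEq I] (i j : I) (Q : I → I → ℝ)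
    (a b : ℝ) :
    ∑ t, ∑ r, (Pi.single i a + Pi.single j b : I → ℝ) t * Q t r *
        (Pi.single i a + Pi.single j b : I → ℝ) r =
      a * Q i i * a + a * Q i j * b + (b * Q j i * a + b * Q j j * b) := by
  simp only [Pi.add_apply, Pi.single_apply, add_mul, ite_mul, zero_mul, mul_add, mul_ite,
    mul_zero, Finset.sum_add_distrib, Finset.sum_ite_eq', Finset.mem_univ, if_true]
  ring

lemma mul_lt_four_of_posDef [Fintype I] [DecidableEq I] {A : Matrix I I ℤ} {c : I → ℤ}
    (hc : ∀ i, 0 < c i) (hA : ∀ i, A i i = 2) (hsymm : ∀ i j, c i * A i j = c j * A j i)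
    (hpd : ∀ x : I → ℝ, x ≠ 0 → 0 < ∑ i, ∑ j, x i * ((c i * A i j : ℤ) : ℝ) * x j)
    {i j : I} (hij : i ≠ j) : A i j * A j i < 4 := by
  have hci : (0 : ℝ) < c i := by exact_mod_cast hc i
  have hcj : (0 : ℝ) < c j := by exact_mod_cast hc j
  have hsymm' : (c j * A j i : ℝ) = c i * A i j := by exact_mod_cast (hsymm i j).symm
  -- at this vector the form equals `2 cᵢ (4 cᵢ cⱼ - (cᵢ Aᵢⱼ)²)`
  have hx : (Pi.single i (-(c i * A i j : ℝ)) + Pi.single j (2 * c i) : I → ℝ) ≠ 0 := by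
    intro h
    have := congrFun h j
    simp [hij.symm, hci.ne'] at this
  have hQ := hpd _ hx
  rw [sum_sum_single_add_single] at hQ
  push_cast [hA] at hQ
  rw [hsymm'] at hQ
  have hs : (c i * A i j : ℝ) * (c i * A i j) = c i * c j * (A i j * A j i) := by
    linear_combination (-(c i * A i j : ℝ)) * hsymm'
  have h' : 0 < (2 * c i : ℝ) * (c i * c j * (4 - A i j * A j i)) := by
    linear_combination hQ - (2 * c i : ℝ) * hs
  have h4 := pos_of_mul_pos_right (pos_of_mul_pos_right h' (by positivity)) (by positivity)
  have : (A i j * A j i : ℝ) < 4 := by linarith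
  exact_mod_cast this

lemma eq_zero_iff_of_symmetrizable {A : Matrix I I ℤ} {c : I → ℤ} (hc : ∀ i, 0 < c i)
    (hsymm : ∀ i j, c i * A i j = c j * A j i) (i j : I) : A i j = 0 ↔ A j i = 0 := by
  have := hsymm i j
  constructor <;> intro h
  · rw [h, mul_zero, eq_comm, mul_eq_zero] at this
    exact this.resolve_left (hc j).ne'
  · rw [h, mul_zero, mul_eq_zero] at this
    exact this.resolve_left (hc i).ne'

end PositiveDefinite

section RootDatum

variable {I : Type*}

lemma exists_wordProd_of_mem_closure {V X : Type*} [AddCommGroup V] [Add X]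
    {ρ : I → Module.End ℤ V} (hρ : ∀ i, ρ i * ρ i = 1) (φ : V → X) {s : I → AddAut X}
    (hs : ∀ i v, s i (φ v) = φ (ρ i v)) {w : AddAut X}
    (hw : w ∈ AddSubgroup.closure (Set.range s)) :
    ∃ L, ∀ v, w (φ v) = φ (wordProd ρ L v) := by
  induction hw using AddSubgroup.closure_induction with
  | mem _ h =>
    obtain ⟨i, rfl⟩ := h
    exact ⟨[i], by simpa using hs i⟩
  | zero => exact ⟨[], fun v => rfl⟩
  | add w w' _ _ hw hw' =>
    obtain ⟨L, hL⟩ := hw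
    obtain ⟨L', hL'⟩ := hw'
    exact ⟨L ++ L', fun v => by
      rw [AddAut.add_apply, hL', hL, wordProd_append, Module.End.mul_apply]⟩
  | neg w _ hw =>
    obtain ⟨L, hL⟩ := hw
    refine ⟨L.reverse, fun v => ?_⟩
    calc (-w) (φ v) = (-w) (w (φ (wordProd ρ L.reverse v))) := by
          rw [hL, ← Module.End.mul_apply, wordProd_mul_wordProd_reverse hρ, Module.End.one_apply]
      _ = φ (wordProd ρ L.reverse v) := AddAut.neg_apply_self _ _ _

variable [Fintype I] {X : Type*} [AddCommGroup X]

lemma linearCombination_simpleReflection [DecidableEq I] {Y : Type*} [AddCommGroup Y]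
    (p : Y →ₗ[ℤ] X →ₗ[ℤ] ℤ) (coroot : I → Y) (root : I → X) (k : I) (v : I → ℤ) :
    Fintype.linearCombination ℤ root
        (simpleReflection (Matrix.of fun i j => p (coroot i) (root j)) k v) =
      Fintype.linearCombination ℤ root v -
        p (coroot k) (Fintype.linearCombination ℤ root v) • root k := by
  rw [simpleReflection_apply, map_sub, map_smul, Fintype.linearCombination_apply_single,
    one_smul]
  simp [Matrix.mulVec, dotProduct, Fintype.linearCombination_apply, mul_comm]

lemma exists_natCoeffs_of_nonneg (root : I → X) {v : I → ℤ} (hv : 0 ≤ v) :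
    ∃ f : I → ℕ, Fintype.linearCombination ℤ root v = ∑ j, (f j : ℤ) • root j :=
  ⟨fun j => (v j).toNat, by simp [Fintype.linearCombination_apply, Int.toNat_of_nonneg (hv _)]⟩

end RootDatum

end RootPositivity

open RootPositivity

theorem stmt_13 {Y X : Type*} [AddCommGroup Y] [AddCommGroup X]
    (p : Y →ₗ[ℤ] X →ₗ[ℤ] ℤ)
    {I : Type*} [Fintype I]
    (coroot : I → Y) (root : I → X)
    (h2 : ∀ i, p (coroot i) (root i) = 2)
    (hoff : ∀ i j, i ≠ j → p (coroot i) (root j) ≤ 0)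
    (hpos : ∃ c : I → ℤ, (∀ i, 0 < c i) ∧
      (∀ i j, ((c i * p (coroot i) (root j) : ℤ) : ℝ) =
        ((c j * p (coroot j) (root i) : ℤ) : ℝ)) ∧
      (∀ x : I → ℝ, x ≠ 0 →
        0 < ∑ i, ∑ j, x i * ((c i * p (coroot i) (root j) : ℤ) : ℝ) * x j))
    (s : I → AddAut X) (hs : ∀ i x, s i x = x - p (coroot i) x • root i) :
    ∀ w ∈ AddSubgroup.closure (Set.range s), ∀ i : I,
      (∃ f : I → ℕ, w (root i) = ∑ j, (f j : ℤ) • root j) ∨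
      (∃ f : I → ℕ, -(w (root i)) = ∑ j, (f j : ℤ) • root j) := by
  classical
  obtain ⟨c, hc, hsymm, hpd⟩ := hpos
  set A : Matrix I I ℤ := Matrix.of fun i j => p (coroot i) (root j)
  have hA : ∀ i, A i i = 2 := h2
  have hsymm' : ∀ i j, c i * A i j = c j * A j i := fun i j => by exact_mod_cast hsymm i j
  have hrank2 : ∀ i j, i ≠ j → ∃ m, IsDihedralPositive (A i j) (A j i) m := fun i j hij =>
    exists_isDihedralPositive (hoff i j hij) (hoff j i hij.symm)
      (eq_zero_iff_of_symmetrizable hc hsymm' i j) (mul_lt_four_of_posDef hc hA hsymm' hpd hij)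
  intro w hw i
  obtain ⟨L, hL⟩ := exists_wordProd_of_mem_closure (simpleReflection_mul_self hA)
    (Fintype.linearCombination ℤ root) (fun k v => by rw [hs, linearCombination_simpleReflection])
    hw
  have hroot : w (root i) =
      Fintype.linearCombination ℤ root (wordProd (simpleReflection A) L (Pi.single i 1)) := by
    rw [← hL, Fintype.linearCombination_apply_single, one_smul]
  rcases nonneg_or_nonpos hA hrank2 ⟨L, rfl⟩ i with h | h
  · exact .inl (hroot ▸ exists_natCoeffs_of_nonneg root h)
  · rw [hroot, ← map_neg]
    exact .inr (exists_natCoeffs_of_nonneg root (neg_nonneg.mpr h))
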